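/- arXiv:2403.17505 — 4 statements merged into one kernel-verified Lean document; each statement's English description precedes it below -/
import Mathlib

section
/- Let d ≥ 1, L > 0, y ∈ ℝ, and let g : [0,1]^d → ℝ be L-Lipschitz with respect to the supremum norm. Let 𝒬 be a finite collection of dyadic cubes of [0,1]^d whose union is [0,1]^d and whose interiors are pairwise disjoint, where a dyadic cube of depth j is a product ∏_{i=1}^d [k_i·2^{-j}, (k_i+1)·2^{-j}] with integers 0 ≤ k_i < 2^j; denote by j_Q the depth of Q and by c_Q its center. Partition 𝒬 into ℐ = {Q : g(c_Q) > y + L·2^{-(j_Q+1)}}, 𝒪 = {Q : g(c_Q) < y − L·2^{-(j_Q+1)}} and 𝒰 = 𝒬 \ (ℐ ∪ 𝒪). Then, with λ the Lebesgue measure on [0,1]^d, the failure probability p = λ({x ∈ [0,1]^d : g(x) < y}) satisfies p⁻ ≤ p ≤ p⁺, where p⁺ = 1 − Σ_{Q∈ℐ} λ(Q) and p⁻ = p⁺ − Σ_{Q∈𝒰} λ(Q); moreover p⁻ = Σ_{Q∈𝒪} λ(Q). -/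
open Set MeasureTheory

/-- The dyadic cube of depth `j` indexed by `k`, i.e. `∏_i [k_i·2^{-j}, (k_i+1)·2^{-j}]`. -/
def dyadicCube (d j : ℕ) (k : Fin d → ℕ) : Set (Fin d → ℝ) :=
  Set.Icc (fun i => (k i : ℝ) * 2 ^ (-(j : ℤ))) (fun i => ((k i : ℝ) + 1) * 2 ^ (-(j : ℤ)))

/-- The center of the dyadic cube of depth `j` indexed by `k`. -/
noncomputable def dyadicCenter (d j : ℕ) (k : Fin d → ℕ) : Fin d → ℝ :=
  fun i => ((k i : ℝ) + 1 / 2) * 2 ^ (-(j : ℤ))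

/-!
On a dyadic cube of depth `j` every point is within sup-distance `2^{-(j+1)}` of the center, so
an `L`-Lipschitz `g` differs from its central value by at most `L·2^{-(j+1)}` on the whole cube.
Hence every cube of `ℐ` is disjoint from the failure set `{g < y}` and every cube of `𝒪` lies
inside it, which bounds `p` from above by `1 - λ(⋃ ℐ)` and from below by `λ(⋃ 𝒪)`. The cubes
overlap only on their frontiers, which are null because the cubes are convex, so the measure of a
union of cubes is the sum of their measures and the measures of all cubes add up to `1`; as no
cube is in both `ℐ` and `𝒪`, removing `ℐ` and `𝒰` from that total leaves exactly `𝒪`.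
-/

open scoped ENNReal Function

section FiniteFamily

variable {α ι : Type*} [MeasurableSpace α] {μ : Measure α} {s : Finset ι} {Q : ι → Set α}
  {A X : Set α}

theorem sum_measureReal_le_of_forall_subset
    (hd : (s : Set ι).Pairwise (AEDisjoint μ on Q)) (hm : ∀ q ∈ s, NullMeasurableSet (Q q) μ)
    (hA : μ A ≠ ∞) (hQA : ∀ q ∈ s, Q q ⊆ A) :
    ∑ q ∈ s, μ.real (Q q) ≤ μ.real A := by
  rw [← measureReal_biUnion_finset₀ hd hm fun q hq => measure_ne_top_of_subset (hQA q hq) hA]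
  exact measureReal_mono (iUnion₂_subset hQA) hA

theorem measureReal_le_sub_sum_of_forall_disjoint
    (hd : (s : Set ι).Pairwise (AEDisjoint μ on Q)) (hm : ∀ q ∈ s, NullMeasurableSet (Q q) μ)
    (hX : μ X ≠ ∞) (hAX : A ⊆ X) (hQX : ∀ q ∈ s, Q q ⊆ X) (hAQ : ∀ q ∈ s, Disjoint A (Q q)) :
    μ.real A ≤ μ.real X - ∑ q ∈ s, μ.real (Q q) := by
  have hUX : (⋃ q ∈ s, Q q) ⊆ X := iUnion₂_subset hQX
  rw [le_sub_iff_add_le,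
    ← measureReal_biUnion_finset₀ hd hm fun q hq => measure_ne_top_of_subset (hQX q hq) hX,
    ← measureReal_union₀ (s.nullMeasurableSet_biUnion hm)
      (disjoint_iUnion₂_right.2 hAQ).aedisjoint (measure_ne_top_of_subset hAX hX)
      (measure_ne_top_of_subset hUX hX)]
  exact measureReal_mono (union_subset hAX hUX) hX

end FiniteFamily

theorem Convex.aedisjoint_of_disjoint_interior {E : Type*} [NormedAddCommGroup E]
    [NormedSpace ℝ E] [MeasurableSpace E] [BorelSpace E] [FiniteDimensional ℝ E]
    (μ : Measure E) [μ.IsAddHaarMeasure] {s t : Set E} (hs : Convex ℝ s) (ht : Convex ℝ t)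
    (hst : Disjoint (interior s) (interior t)) : AEDisjoint μ s t := by
  refine measure_mono_null ?_
    (measure_union_null (hs.addHaar_frontier μ) (ht.addHaar_frontier μ))
  rintro x ⟨hxs, hxt⟩
  by_cases hx : x ∈ interior s
  · exact Or.inr ⟨subset_closure hxt, fun hx' => hst.ne_of_mem hx hx' rfl⟩
  · exact Or.inl ⟨subset_closure hxs, hx⟩

theorem Finset.sum_sub_sum_filter_sub_sum_filter_not_and_not {ι G : Type*} [AddCommGroup G]
    (s : Finset ι) (p r : ι → Prop) [DecidablePred p] [DecidablePred r] (f : ι → G)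
    (hpr : ∀ i ∈ s, p i → ¬ r i) :
    ∑ i ∈ s, f i - ∑ i ∈ s.filter p, f i - ∑ i ∈ s.filter (fun i => ¬ p i ∧ ¬ r i), f i
      = ∑ i ∈ s.filter r, f i := by
  have hr : (s.filter (¬ p ·)).filter r = s.filter r := by
    rw [filter_filter]
    exact filter_congr fun i hi => ⟨And.right, fun h => ⟨fun hp => hpr i hi hp h, h⟩⟩
  rw [← sum_filter_add_sum_filter_not s p f,
    ← sum_filter_add_sum_filter_not (s.filter (¬ p ·)) r f, hr, filter_filter]
  abel

section Dyadic

variable {d j : ℕ} {k : Fin d → ℕ}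

theorem dyadicCenter_mem_dyadicCube : dyadicCenter d j k ∈ dyadicCube d j k := by
  constructor <;> intro i <;> simp only [dyadicCenter] <;> gcongr <;> norm_num

theorem norm_sub_dyadicCenter_le {x : Fin d → ℝ} (hx : x ∈ dyadicCube d j k) :
    ‖x - dyadicCenter d j k‖ ≤ 2 ^ (-(j : ℤ) - 1) := by
  have hhalf : (2 : ℝ) ^ (-(j : ℤ) - 1) = 2 ^ (-(j : ℤ)) / 2 := by
    rw [zpow_sub₀ two_ne_zero, zpow_one]
  refine (pi_norm_le_iff_of_nonneg (by positivity)).2 fun i => ?_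
  have hlo := hx.1 i
  have hhi := hx.2 i
  simp only [Pi.sub_apply, Real.norm_eq_abs, dyadicCenter, abs_le, hhalf] at hlo hhi ⊢
  constructor <;> linarith

variable {K : Set (Fin d → ℝ)} {g : (Fin d → ℝ) → ℝ} {L y : ℝ}

theorem abs_sub_apply_dyadicCenter_le (hL : 0 ≤ L)
    (hLip : ∀ x ∈ K, ∀ x' ∈ K, |g x - g x'| ≤ L * ‖x - x'‖) (hK : dyadicCube d j k ⊆ K)
    {x : Fin d → ℝ} (hx : x ∈ dyadicCube d j k) :
    |g x - g (dyadicCenter d j k)| ≤ L * 2 ^ (-(j : ℤ) - 1) :=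
  (hLip x (hK hx) _ (hK dyadicCenter_mem_dyadicCube)).trans
    (mul_le_mul_of_nonneg_left (norm_sub_dyadicCenter_le hx) hL)

theorem dyadicCube_subset_of_apply_dyadicCenter_lt (hL : 0 ≤ L)
    (hLip : ∀ x ∈ K, ∀ x' ∈ K, |g x - g x'| ≤ L * ‖x - x'‖) (hK : dyadicCube d j k ⊆ K)
    (hy : g (dyadicCenter d j k) < y - L * 2 ^ (-(j : ℤ) - 1)) :
    dyadicCube d j k ⊆ {x ∈ K | g x < y} := fun x hx =>
  ⟨hK hx, by linarith [(abs_le.1 (abs_sub_apply_dyadicCenter_le hL hLip hK hx)).2]⟩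

theorem disjoint_dyadicCube_of_lt_apply_dyadicCenter (hL : 0 ≤ L)
    (hLip : ∀ x ∈ K, ∀ x' ∈ K, |g x - g x'| ≤ L * ‖x - x'‖) (hK : dyadicCube d j k ⊆ K)
    (hy : y + L * 2 ^ (-(j : ℤ) - 1) < g (dyadicCenter d j k)) :
    Disjoint {x ∈ K | g x < y} (dyadicCube d j k) :=
  disjoint_right.2 fun x hx hxy => by
    linarith [hxy.2, (abs_le.1 (abs_sub_apply_dyadicCenter_le hL hLip hK hx)).1]

end Dyadic

open Classical in
theorem dyadic_bounds_on_failure_probability_general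
    (d : ℕ) (L y : ℝ) (hL : 0 < L)
    (g : (Fin d → ℝ) → ℝ)
    (hLip : ∀ x ∈ Icc (0 : Fin d → ℝ) 1, ∀ x' ∈ Icc (0 : Fin d → ℝ) 1,
      |g x - g x'| ≤ L * ‖x - x'‖)
    (ι : Type) (s : Finset ι) (jQ : ι → ℕ) (kQ : ι → Fin d → ℕ)
    (hcover : (⋃ q ∈ s, dyadicCube d (jQ q) (kQ q)) = Icc (0 : Fin d → ℝ) 1)
    (hdisj : ∀ q ∈ s, ∀ q' ∈ s, q ≠ q' →
      interior (dyadicCube d (jQ q) (kQ q)) ∩ interior (dyadicCube d (jQ q') (kQ q')) = ∅) :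
    (volume {x ∈ Icc (0 : Fin d → ℝ) 1 | g x < y}).toReal ≤
        1 - ∑ q ∈ s.filter
            (fun q => y + L * 2 ^ (-(jQ q : ℤ) - 1) < g (dyadicCenter d (jQ q) (kQ q))),
          (volume (dyadicCube d (jQ q) (kQ q))).toReal
      ∧ (1 - ∑ q ∈ s.filter
            (fun q => y + L * 2 ^ (-(jQ q : ℤ) - 1) < g (dyadicCenter d (jQ q) (kQ q))),
          (volume (dyadicCube d (jQ q) (kQ q))).toReal)
        - ∑ q ∈ s.filter
            (fun q => ¬ y + L * 2 ^ (-(jQ q : ℤ) - 1) < g (dyadicCenter d (jQ q) (kQ q)) ∧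
              ¬ g (dyadicCenter d (jQ q) (kQ q)) < y - L * 2 ^ (-(jQ q : ℤ) - 1)),
          (volume (dyadicCube d (jQ q) (kQ q))).toReal
        ≤ (volume {x ∈ Icc (0 : Fin d → ℝ) 1 | g x < y}).toReal
      ∧ (1 - ∑ q ∈ s.filter
            (fun q => y + L * 2 ^ (-(jQ q : ℤ) - 1) < g (dyadicCenter d (jQ q) (kQ q))),
          (volume (dyadicCube d (jQ q) (kQ q))).toReal)
        - ∑ q ∈ s.filter
            (fun q => ¬ y + L * 2 ^ (-(jQ q : ℤ) - 1) < g (dyadicCenter d (jQ q) (kQ q)) ∧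
              ¬ g (dyadicCenter d (jQ q) (kQ q)) < y - L * 2 ^ (-(jQ q : ℤ) - 1)),
          (volume (dyadicCube d (jQ q) (kQ q))).toReal
        = ∑ q ∈ s.filter
            (fun q => g (dyadicCenter d (jQ q) (kQ q)) < y - L * 2 ^ (-(jQ q : ℤ) - 1)),
          (volume (dyadicCube d (jQ q) (kQ q))).toReal := by
  simp only [← measureReal_def]
  have hQK : ∀ q ∈ s, dyadicCube d (jQ q) (kQ q) ⊆ Icc 0 1 := fun q hq =>
    hcover ▸ Finset.subset_set_biUnion_of_mem (f := fun q => dyadicCube d (jQ q) (kQ q)) hq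
  have hpair : ∀ t ⊆ s,
      (t : Set ι).Pairwise (AEDisjoint volume on fun q => dyadicCube d (jQ q) (kQ q)) :=
    fun t ht q hq q' hq' hne =>
      (convex_Icc _ _).aedisjoint_of_disjoint_interior volume (convex_Icc _ _)
        (disjoint_iff_inter_eq_empty.2 (hdisj q (ht hq) q' (ht hq') hne))
  have hmeas : ∀ q, NullMeasurableSet (dyadicCube d (jQ q) (kQ q)) volume := fun _ =>
    measurableSet_Icc.nullMeasurableSet
  have hfin : volume (Icc (0 : Fin d → ℝ) 1) ≠ ∞ := isCompact_Icc.measure_ne_top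
  have hunit : volume.real (Icc (0 : Fin d → ℝ) 1) = 1 := by
    simp [measureReal_def, Real.volume_Icc_pi]
  have htotal : ∑ q ∈ s, volume.real (dyadicCube d (jQ q) (kQ q)) = 1 := by
    rw [← measureReal_biUnion_finset₀ (hpair s subset_rfl) (fun q _ => hmeas q)
      fun q hq => measure_ne_top_of_subset (hQK q hq) hfin, hcover, hunit]
  have hsplit := Finset.sum_sub_sum_filter_sub_sum_filter_not_and_not s
    (fun q => y + L * 2 ^ (-(jQ q : ℤ) - 1) < g (dyadicCenter d (jQ q) (kQ q)))
    (fun q => g (dyadicCenter d (jQ q) (kQ q)) < y - L * 2 ^ (-(jQ q : ℤ) - 1))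
    (fun q => volume.real (dyadicCube d (jQ q) (kQ q)))
    fun q _ hI hO => by
      have : 0 ≤ L * (2 : ℝ) ^ (-(jQ q : ℤ) - 1) := by positivity
      linarith
  rw [htotal] at hsplit
  refine ⟨?_, hsplit ▸ ?_, hsplit⟩
  · rw [← hunit]
    exact measureReal_le_sub_sum_of_forall_disjoint (hpair _ (Finset.filter_subset _ _))
      (fun q _ => hmeas q) hfin (sep_subset _ _) (fun q hq => hQK q (Finset.mem_filter.1 hq).1)
      fun q hq => disjoint_dyadicCube_of_lt_apply_dyadicCenter hL.le hLip
        (hQK q (Finset.mem_filter.1 hq).1) (Finset.mem_filter.1 hq).2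
  · exact sum_measureReal_le_of_forall_subset (hpair _ (Finset.filter_subset _ _))
      (fun q _ => hmeas q) (measure_ne_top_of_subset (sep_subset _ _) hfin)
      fun q hq => dyadicCube_subset_of_apply_dyadicCenter_lt hL.le hLip
        (hQK q (Finset.mem_filter.1 hq).1) (Finset.mem_filter.1 hq).2

open Classical in
/-- given a finite partition of `[0,1]^d` into dyadic cubes (with pairwise
disjoint interiors), labelling each cube by a query of `g` at its center yields
deterministic bounds `p⁻ ≤ p ≤ p⁺` on the failure probability
`p = λ({x ∈ [0,1]^d : g x < y})`, where `p⁺ = 1 − Σ_{Q∈ℐ} λ(Q)`,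
`p⁻ = p⁺ − Σ_{Q∈𝒰} λ(Q)`, and moreover `p⁻ = Σ_{Q∈𝒪} λ(Q)`. -/
theorem dyadic_bounds_on_failure_probability
    (d : ℕ) (hd : 1 ≤ d) (L y : ℝ) (hL : 0 < L)
    (g : (Fin d → ℝ) → ℝ)
    (hLip : ∀ x ∈ Icc (0 : Fin d → ℝ) 1, ∀ x' ∈ Icc (0 : Fin d → ℝ) 1,
      |g x - g x'| ≤ L * ‖x - x'‖)
    (ι : Type) (s : Finset ι) (jQ : ι → ℕ) (kQ : ι → Fin d → ℕ)
    (hk : ∀ q ∈ s, ∀ i, kQ q i < 2 ^ jQ q)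
    (hcover : (⋃ q ∈ s, dyadicCube d (jQ q) (kQ q)) = Icc (0 : Fin d → ℝ) 1)
    (hdisj : ∀ q ∈ s, ∀ q' ∈ s, q ≠ q' →
      interior (dyadicCube d (jQ q) (kQ q)) ∩ interior (dyadicCube d (jQ q') (kQ q')) = ∅) :
    (volume {x ∈ Icc (0 : Fin d → ℝ) 1 | g x < y}).toReal ≤
        1 - ∑ q ∈ s.filter
            (fun q => y + L * 2 ^ (-(jQ q : ℤ) - 1) < g (dyadicCenter d (jQ q) (kQ q))),
          (volume (dyadicCube d (jQ q) (kQ q))).toReal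
      ∧ (1 - ∑ q ∈ s.filter
            (fun q => y + L * 2 ^ (-(jQ q : ℤ) - 1) < g (dyadicCenter d (jQ q) (kQ q))),
          (volume (dyadicCube d (jQ q) (kQ q))).toReal)
        - ∑ q ∈ s.filter
            (fun q => ¬ y + L * 2 ^ (-(jQ q : ℤ) - 1) < g (dyadicCenter d (jQ q) (kQ q)) ∧
              ¬ g (dyadicCenter d (jQ q) (kQ q)) < y - L * 2 ^ (-(jQ q : ℤ) - 1)),
          (volume (dyadicCube d (jQ q) (kQ q))).toReal
        ≤ (volume {x ∈ Icc (0 : Fin d → ℝ) 1 | g x < y}).toReal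
      ∧ (1 - ∑ q ∈ s.filter
            (fun q => y + L * 2 ^ (-(jQ q : ℤ) - 1) < g (dyadicCenter d (jQ q) (kQ q))),
          (volume (dyadicCube d (jQ q) (kQ q))).toReal)
        - ∑ q ∈ s.filter
            (fun q => ¬ y + L * 2 ^ (-(jQ q : ℤ) - 1) < g (dyadicCenter d (jQ q) (kQ q)) ∧
              ¬ g (dyadicCenter d (jQ q) (kQ q)) < y - L * 2 ^ (-(jQ q : ℤ) - 1)),
          (volume (dyadicCube d (jQ q) (kQ q))).toReal
        = ∑ q ∈ s.filter
            (fun q => g (dyadicCenter d (jQ q) (kQ q)) < y - L * 2 ^ (-(jQ q : ℤ) - 1)),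
          (volume (dyadicCube d (jQ q) (kQ q))).toReal :=
  dyadic_bounds_on_failure_probability_general d L y hL g hLip ι s jQ kQ hcover hdisj
end

section
/- Let d ≥ 2, L > 0, C > 0, y ∈ ℝ, and let g : [0,1]^d → ℝ satisfy the level set condition λ({x ∈ [0,1]^d : |g(x) − y| ≤ δ}) ≤ (C/L)·δ for all δ > 0, where λ is the Lebesgue measure. Fix j ≥ 0 and consider the 2^{dj} dyadic cubes of depth j, i.e. the products ∏_{i=1}^d [k_i·2^{-j}, (k_i+1)·2^{-j}] with integers 0 ≤ k_i < 2^j. If g is moreover L-Lipschitz with respect to the supremum norm, then the union of the depth-j dyadic cubes Q whose center c_Q satisfies |g(c_Q) − y| ≤ L·2^{-(j+1)} has Lebesgue measure at most C·2^{-j}, and consequently the number of such 'uncertain' cubes is at most C·2^{(d−1)j}. -/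
open Set MeasureTheory

open Classical in
/-- under the level set condition and the Lipschitz condition, the union of
the depth-`j` dyadic cubes whose center lies in the band `|g(c_Q) − y| ≤ L·2^{-(j+1)}`
has Lebesgue measure at most `C·2^{-j}`, and the number of such uncertain cubes is at
most `C·2^{(d−1)j}`. -/
theorem uncertain_cubes_count_bound
    (d : ℕ) (hd : 2 ≤ d) (L C y : ℝ) (hL : 0 < L) (hC : 0 < C)
    (g : (Fin d → ℝ) → ℝ)
    (hlevel : ∀ δ : ℝ, 0 < δ →
      (volume {x ∈ Icc (0 : Fin d → ℝ) 1 | |g x - y| ≤ δ}).toReal ≤ (C / L) * δ)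
    (hLip : ∀ x ∈ Icc (0 : Fin d → ℝ) 1, ∀ x' ∈ Icc (0 : Fin d → ℝ) 1,
      |g x - g x'| ≤ L * ‖x - x'‖)
    (j : ℕ) :
    (volume (⋃ k ∈ (Finset.univ : Finset (Fin d → Fin (2 ^ j))).filter
        (fun k => |g (dyadicCenter d j (fun i => (k i : ℕ))) - y| ≤ L * 2 ^ (-(j : ℤ) - 1)),
        dyadicCube d j (fun i => (k i : ℕ)))).toReal ≤ C * 2 ^ (-(j : ℤ))
      ∧ (((Finset.univ : Finset (Fin d → Fin (2 ^ j))).filter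
        (fun k => |g (dyadicCenter d j (fun i => (k i : ℕ))) - y| ≤ L * 2 ^ (-(j : ℤ) - 1))).card
          : ℝ) ≤ C * 2 ^ ((d - 1) * j) := by
  set h : ℝ := 2 ^ (-(j : ℤ)) with hh_def
  have hh : 0 < h := by positivity
  have h2j : (2 : ℝ) ^ j * h = 1 := by
    rw [hh_def, ← zpow_natCast (2:ℝ) j, ← zpow_add₀ (two_ne_zero)]
    simp
  have hhalf : (2 : ℝ) ^ (-(j : ℤ) - 1) = h / 2 := by
    rw [zpow_sub₀ (two_ne_zero), zpow_one, hh_def]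
  set s := (Finset.univ : Finset (Fin d → Fin (2 ^ j))).filter
      (fun k => |g (dyadicCenter d j (fun i => (k i : ℕ))) - y| ≤ L * 2 ^ (-(j : ℤ) - 1))
    with hs_def
  -- cubes are in the unit cube
  have hk1 : ∀ (k : Fin d → Fin (2 ^ j)) (i : Fin d), ((k i : ℕ) : ℝ) + 1 ≤ 2 ^ j := by
    intro k i
    have := (k i).isLt
    exact_mod_cast Nat.succ_le_of_lt this
  have cube_sub : ∀ k : Fin d → Fin (2 ^ j),
      dyadicCube d j (fun i => (k i : ℕ)) ⊆ Icc (0 : Fin d → ℝ) 1 := by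
    intro k x hx
    obtain ⟨hx1, hx2⟩ := hx
    constructor
    · intro i
      have := hx1 i
      have hk0 : (0:ℝ) ≤ ((k i : ℕ) : ℝ) * h := by positivity
      exact le_trans hk0 this
    · intro i
      have := hx2 i
      refine le_trans this ?_
      calc (((k i : ℕ) : ℝ) + 1) * h ≤ 2 ^ j * h := by
            exact mul_le_mul_of_nonneg_right (hk1 k i) hh.le
        _ = 1 := h2j
  have center_mem : ∀ k : Fin d → Fin (2 ^ j),
      dyadicCenter d j (fun i => (k i : ℕ)) ∈ dyadicCube d j (fun i => (k i : ℕ)) := by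
    intro k
    constructor
    · intro i
      simp only [dyadicCenter]
      have : ((k i : ℕ) : ℝ) ≤ ((k i : ℕ) : ℝ) + 1/2 := by linarith
      exact mul_le_mul_of_nonneg_right this hh.le
    · intro i
      simp only [dyadicCenter]
      have : ((k i : ℕ) : ℝ) + 1/2 ≤ ((k i : ℕ) : ℝ) + 1 := by linarith
      exact mul_le_mul_of_nonneg_right this hh.le
  -- distance from a point of the cube to the center
  have dist_bound : ∀ (k : Fin d → Fin (2 ^ j)) (x : Fin d → ℝ),
      x ∈ dyadicCube d j (fun i => (k i : ℕ)) →
      ‖x - dyadicCenter d j (fun i => (k i : ℕ))‖ ≤ h / 2 := by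
    intro k x hx
    obtain ⟨hx1, hx2⟩ := hx
    rw [pi_norm_le_iff_of_nonneg (by positivity)]
    intro i
    have h1 := hx1 i
    have h2 := hx2 i
    simp only [Pi.sub_apply, dyadicCenter, Real.norm_eq_abs] at h1 h2 ⊢
    simp only [← hh_def] at h1 h2 ⊢
    rw [abs_le]
    constructor <;> linarith
  -- the union is contained in the level set at δ = L * h
  have union_sub : (⋃ k ∈ s, dyadicCube d j (fun i => (k i : ℕ))) ⊆
      {x ∈ Icc (0 : Fin d → ℝ) 1 | |g x - y| ≤ L * h} := by
    intro x hx
    simp only [mem_iUnion] at hx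
    obtain ⟨k, hk, hxk⟩ := hx
    rw [hs_def, Finset.mem_filter] at hk
    have hc := hk.2
    rw [hhalf] at hc
    have hxI := cube_sub k hxk
    refine ⟨hxI, ?_⟩
    have hcI := cube_sub k (center_mem k)
    have hlip := hLip x hxI _ hcI
    have hdist := dist_bound k x hxk
    have : |g x - g (dyadicCenter d j (fun i => (k i : ℕ)))| ≤ L * (h / 2) :=
      le_trans hlip (mul_le_mul_of_nonneg_left hdist hL.le)
    calc |g x - y| ≤ |g x - g (dyadicCenter d j (fun i => (k i : ℕ)))|
          + |g (dyadicCenter d j (fun i => (k i : ℕ))) - y| := by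
          have := abs_sub_le (g x) (g (dyadicCenter d j (fun i => (k i : ℕ)))) y
          linarith [abs_sub_le (g x) (g (dyadicCenter d j (fun i => (k i : ℕ)))) y]
      _ ≤ L * (h / 2) + L * (h / 2) := add_le_add this hc
      _ = L * h := by ring
  -- finiteness
  have hIccvol : volume (Icc (0 : Fin d → ℝ) 1) = 1 := by
    rw [Real.volume_Icc_pi]
    simp
  have hUfin : volume (⋃ k ∈ s, dyadicCube d j (fun i => (k i : ℕ))) ≠ ⊤ := by
    refine ne_top_of_le_ne_top (by rw [hIccvol]; exact ENNReal.one_ne_top) (measure_mono ?_)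
    exact iUnion₂_subset fun k _ => cube_sub k
  have hSfin : volume {x ∈ Icc (0 : Fin d → ℝ) 1 | |g x - y| ≤ L * h} ≠ ⊤ := by
    refine ne_top_of_le_ne_top (by rw [hIccvol]; exact ENNReal.one_ne_top) (measure_mono ?_)
    exact fun x hx => hx.1
  -- first bound
  have main1 : (volume (⋃ k ∈ s, dyadicCube d j (fun i => (k i : ℕ)))).toReal ≤ C * h := by
    have step := ENNReal.toReal_mono hSfin (measure_mono union_sub)
    have hlev := hlevel (L * h) (by positivity)
    calc (volume (⋃ k ∈ s, dyadicCube d j (fun i => (k i : ℕ)))).toReal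
        ≤ (volume {x ∈ Icc (0 : Fin d → ℝ) 1 | |g x - y| ≤ L * h}).toReal := step
      _ ≤ (C / L) * (L * h) := hlev
      _ = C * h := by field_simp
  -- open cubes
  set O : (Fin d → Fin (2 ^ j)) → Set (Fin d → ℝ) :=
    fun k => Set.pi univ fun i => Ioo (((k i : ℕ) : ℝ) * h) ((((k i : ℕ) : ℝ) + 1) * h)
    with hO_def
  have O_sub : ∀ k, O k ⊆ dyadicCube d j (fun i => (k i : ℕ)) := by
    intro k x hx
    constructor <;> intro i <;>
      [exact (hx i (mem_univ i)).1.le; exact (hx i (mem_univ i)).2.le]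
  have O_meas : ∀ k, MeasurableSet (O k) := by
    intro k
    exact MeasurableSet.univ_pi fun i => measurableSet_Ioo
  have O_disj : (↑s : Set (Fin d → Fin (2 ^ j))).PairwiseDisjoint O := by
    intro k _ k' _ hne
    rw [Function.onFun, Set.disjoint_left]
    intro x hx hx'
    have : ∃ i, k i ≠ k' i := by
      by_contra hcon
      push_neg at hcon
      exact hne (funext hcon)
    obtain ⟨i, hi⟩ := this
    have h1 := hx i (mem_univ i)
    have h2 := hx' i (mem_univ i)
    have : ((k i : ℕ) : ℝ) ≠ ((k' i : ℕ) : ℝ) := by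
      exact_mod_cast fun e => hi (Fin.ext (by exact_mod_cast e))
    rcases lt_or_gt_of_ne this with hlt | hgt
    · have : ((k i : ℕ) : ℝ) + 1 ≤ ((k' i : ℕ) : ℝ) := by
        have : (k i : ℕ) < (k' i : ℕ) := by exact_mod_cast hlt
        exact_mod_cast Nat.succ_le_of_lt this
      nlinarith [h1.2, h2.1]
    · have : ((k' i : ℕ) : ℝ) + 1 ≤ ((k i : ℕ) : ℝ) := by
        have : (k' i : ℕ) < (k i : ℕ) := by exact_mod_cast hgt
        exact_mod_cast Nat.succ_le_of_lt this
      nlinarith [h1.1, h2.2]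
  have O_vol : ∀ k, volume (O k) = ENNReal.ofReal h ^ d := by
    intro k
    rw [hO_def]
    rw [volume_pi_pi]
    have : ∀ i : Fin d, volume (Ioo (((k i : ℕ) : ℝ) * h) ((((k i : ℕ) : ℝ) + 1) * h))
        = ENNReal.ofReal h := by
      intro i
      rw [Real.volume_Ioo]
      ring_nf
    simp only [this, Finset.prod_const, Finset.card_univ, Fintype.card_fin]
  have Ovol_sum : volume (⋃ k ∈ s, O k) = (s.card : ENNReal) * ENNReal.ofReal h ^ d := by
    rw [measure_biUnion_finset O_disj (fun k _ => O_meas k)]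
    simp [O_vol, Finset.sum_const, nsmul_eq_mul]
  have count_le : (s.card : ℝ) * h ^ d ≤ C * h := by
    have hsub : (⋃ k ∈ s, O k) ⊆ ⋃ k ∈ s, dyadicCube d j (fun i => (k i : ℕ)) :=
      iUnion₂_mono fun k _ => O_sub k
    have := ENNReal.toReal_mono hUfin (measure_mono hsub)
    rw [Ovol_sum] at this
    have heval : ((s.card : ENNReal) * ENNReal.ofReal h ^ d).toReal = (s.card : ℝ) * h ^ d := by
      simp [ENNReal.toReal_mul, ENNReal.toReal_pow, ENNReal.toReal_ofReal hh.le]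
    rw [heval] at this
    exact le_trans this main1
  refine ⟨main1, ?_⟩
  -- algebra: h = h^d * 2^((d-1)*j)
  have key : h = h ^ d * 2 ^ ((d - 1) * j) := by
    rw [hh_def, ← zpow_natCast (2:ℝ) ((d-1)*j), ← zpow_natCast ((2:ℝ) ^ (-(j:ℤ))) d,
      ← zpow_mul, ← zpow_add₀ (two_ne_zero)]
    congr 1
    have hd1 : (1:ℕ) ≤ d := le_trans one_le_two hd
    push_cast [Nat.cast_sub hd1]
    ring
  have hpow : (0:ℝ) < h ^ d := by positivity
  have : (s.card : ℝ) * h ^ d ≤ (C * 2 ^ ((d - 1) * j)) * h ^ d := by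
    calc (s.card : ℝ) * h ^ d ≤ C * h := count_le
      _ = (C * 2 ^ ((d - 1) * j)) * h ^ d := by
          conv_lhs => rw [key]
          ring
  exact le_of_mul_le_mul_right this hpow
end

section
/- Let E be a measurable space, μ a probability measure on E, and h : E → ℝ a measurable function. Let X_1, …, X_n be independent E-valued random variables, each with law μ (n ≥ 1). Then for every ε ∈ (0,1), the probability (over the sample X_1,…,X_n) of the event { μ({x ∈ E : h(x) > max_{1≤i≤n} h(X_i)}) > ε } is at most (1 − ε)^n. In other words, the conservatively shifted threshold max_i h(X_i) fails to dominate h on a set of μ-measure exceeding ε only with probability at most (1 − ε)^n. -/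
open MeasureTheory ProbabilityTheory

/-- for an i.i.d. sample `X_1, …, X_n` of law `μ` (`n ≥ 1`) and any
measurable `h : E → ℝ`, for every `ε ∈ (0,1)` the probability that the region
`{x : h x > max_i h(X_i)}` has `μ`-mass larger than `ε` is at most `(1-ε)^n`. -/
theorem shifted_threshold_concentration
    {E Ω : Type*} [MeasurableSpace E] [MeasurableSpace Ω]
    (P : Measure Ω) [IsProbabilityMeasure P]
    (μ : Measure E) [IsProbabilityMeasure μ]
    (h : E → ℝ) (hmeas : Measurable h)
    (n : ℕ) (hn : 1 ≤ n) (X : Fin n → Ω → E)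
    (hXmeas : ∀ i, Measurable (X i))
    (hlaw : ∀ i, Measure.map (X i) P = μ)
    (hindep : iIndepFun X P) :
    ∀ ε ∈ Set.Ioo (0 : ℝ) 1,
      P {ω | ENNReal.ofReal ε < μ {x | (⨆ i, h (X i ω)) < h x}}
        ≤ ENNReal.ofReal ((1 - ε) ^ n) := by
  intro ε hε
  obtain ⟨hε0, hε1⟩ := hε
  set ε' := ENNReal.ofReal ε with hε'def
  have hε'0 : 0 < ε' := ENNReal.ofReal_pos.2 hε0
  set G : ℝ → ENNReal := fun t => μ {x | t < h x} with hG
  have hGmeas : ∀ t : ℝ, MeasurableSet {x | t < h x} := fun t =>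
    measurableSet_lt measurable_const hmeas
  have hGanti : Antitone G := fun s t hst =>
    measure_mono (fun x hx => lt_of_le_of_lt hst hx)
  -- target bound: ENNReal.ofReal ((1-ε)^n) = (1 - ε')^n
  have htarget : ENNReal.ofReal ((1 - ε) ^ n) = (1 - ε') ^ n := by
    rw [ENNReal.ofReal_pow (by linarith), ENNReal.ofReal_sub 1 hε0.le,
      ENNReal.ofReal_one]
  by_cases hex : ∃ t, ε' < G t
  swap
  · push_neg at hex
    have hempty : {ω | ε' < μ {x | (⨆ i, h (X i ω)) < h x}} = ∅ := by
      ext ω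
      simp only [Set.mem_setOf_eq, Set.mem_empty_iff_false, iff_false, not_lt]
      exact hex _
    rw [hempty, measure_empty]
    exact zero_le
  obtain ⟨t₀, ht₀⟩ := hex
  -- the set of levels where G drops to ≤ ε'
  set S : Set ℝ := {t | G t ≤ ε'} with hS
  have hSne : S.Nonempty := by
    have hlim : Filter.Tendsto (fun k : ℕ => G k) Filter.atTop (nhds 0) := by
      have hinter : ⋂ k : ℕ, {x | (k : ℝ) < h x} = ∅ := by
        ext x
        simp only [Set.mem_iInter, Set.mem_setOf_eq, Set.mem_empty_iff_false, iff_false, not_forall,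
          not_lt]
        obtain ⟨k, hk⟩ := exists_nat_ge (h x)
        exact ⟨k, hk⟩
      have := tendsto_measure_iInter_atTop (μ := μ)
        (s := fun k : ℕ => {x | (k : ℝ) < h x})
        (fun k => (hGmeas _).nullMeasurableSet)
        (fun a b hab => Set.setOf_subset_setOf.2 fun x hx =>
          lt_of_le_of_lt (by exact_mod_cast hab) hx)
        ⟨0, measure_ne_top _ _⟩
      rwa [hinter, measure_empty] at this
    have := (hlim.eventually_le_const hε'0).exists
    obtain ⟨N, hN⟩ := this
    exact ⟨N, hN⟩
  have hSbdd : BddBelow S := by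
    refine ⟨t₀, fun t ht => ?_⟩
    by_contra hlt
    push_neg at hlt
    exact absurd ((hGanti hlt.le).trans ht) (not_le.2 ht₀)
  set t' : ℝ := sInf S with ht'
  -- right continuity: G t' ≤ ε'
  have hGt' : G t' ≤ ε' := by
    have hunion : {x | t' < h x} = ⋃ k : ℕ, {x | t' + 1 / (k + 1) < h x} := by
      ext x
      simp only [Set.mem_setOf_eq, Set.mem_iUnion]
      constructor
      · intro hx
        obtain ⟨k, hk⟩ := exists_nat_one_div_lt (sub_pos.2 hx)
        exact ⟨k, by push_cast at hk ⊢; linarith⟩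
      · rintro ⟨k, hk⟩
        have : (0:ℝ) < 1 / ((k:ℝ) + 1) := by positivity
        linarith
    have hmono : Monotone fun k : ℕ => {x | t' + 1 / (k + 1) < h x} := by
      intro a b hab
      refine Set.setOf_subset_setOf.2 fun x hx => lt_of_le_of_lt ?_ hx
      have hab' : (a:ℝ) ≤ b := Nat.cast_le.2 hab
      have : (1:ℝ) / ((b:ℝ) + 1) ≤ 1 / ((a:ℝ) + 1) :=
        one_div_le_one_div_of_le (by positivity) (by linarith)
      linarith
    rw [hG]
    simp only []
    rw [hunion, hmono.directed_le.measure_iUnion]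
    refine iSup_le fun k => ?_
    have hpos : (0:ℝ) < 1 / ((k:ℝ) + 1) := by positivity
    obtain ⟨s, hsS, hslt⟩ := Real.lt_sInf_add_pos hSne hpos
    calc μ {x | t' + 1 / (↑k + 1) < h x} ≤ G s := hGanti hslt.le
    _ ≤ ε' := hsS
  -- below t', G exceeds ε', hence μ{h < t'} ≤ 1 - ε'
  have hA : μ {x | h x < t'} ≤ 1 - ε' := by
    have hle : ∀ s : ℝ, s < t' → μ {x | h x ≤ s} ≤ 1 - ε' := by
      intro s hs
      have hsnot : ¬ G s ≤ ε' := fun hle =>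
        absurd (csInf_le hSbdd hle) (not_le.2 hs)
      push_neg at hsnot
      have hcompl : {x | h x ≤ s} = {x | s < h x}ᶜ := by
        ext x; simp [not_lt]
      rw [hcompl, prob_compl_eq_one_sub (hGmeas s)]
      exact tsub_le_tsub_left hsnot.le 1
    have hunion : {x | h x < t'} = ⋃ k : ℕ, {x | h x ≤ t' - 1 / (k + 1)} := by
      ext x
      simp only [Set.mem_setOf_eq, Set.mem_iUnion]
      constructor
      · intro hx
        obtain ⟨k, hk⟩ := exists_nat_one_div_lt (sub_pos.2 hx)
        exact ⟨k, by push_cast at hk ⊢; linarith⟩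
      · rintro ⟨k, hk⟩
        have : (0:ℝ) < 1 / ((k:ℝ) + 1) := by positivity
        linarith
    have hmono : Monotone fun k : ℕ => {x | h x ≤ t' - 1 / (k + 1)} := by
      intro a b hab
      refine Set.setOf_subset_setOf.2 fun x hx => hx.trans ?_
      have hab' : (a:ℝ) ≤ b := Nat.cast_le.2 hab
      have : (1:ℝ) / ((b:ℝ) + 1) ≤ 1 / ((a:ℝ) + 1) :=
        one_div_le_one_div_of_le (by positivity) (by linarith)
      linarith
    rw [hunion, hmono.directed_le.measure_iUnion]
    refine iSup_le fun k => ?_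
    have hpos : (0:ℝ) < 1 / ((k:ℝ) + 1) := by positivity
    exact hle _ (by linarith)
  -- inclusion of the bad event
  have hsub : {ω | ε' < μ {x | (⨆ i, h (X i ω)) < h x}} ⊆
      ⋂ i, (X i) ⁻¹' {x | h x < t'} := by
    intro ω hω
    simp only [Set.mem_setOf_eq] at hω
    have hMlt : (⨆ i, h (X i ω)) < t' := by
      by_contra hle
      push_neg at hle
      exact absurd (hω.trans_le (hGanti hle)) (not_lt.2 hGt')
    simp only [Set.mem_iInter, Set.mem_preimage, Set.mem_setOf_eq]
    intro i
    haveI : Nonempty (Fin n) := ⟨⟨0, hn⟩⟩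
    exact (le_ciSup (Set.Finite.bddAbove (Set.finite_range _)) i).trans_lt hMlt
  -- independence computation
  have hAmeas : MeasurableSet {x | h x < t'} := measurableSet_lt hmeas measurable_const
  have hprod : P (⋂ i, (X i) ⁻¹' {x | h x < t'}) = ∏ i : Fin n, μ {x | h x < t'} := by
    rw [hindep.meas_iInter (fun i => ⟨{x | h x < t'}, hAmeas, rfl⟩)]
    refine Finset.prod_congr rfl fun i _ => ?_
    rw [← hlaw i, Measure.map_apply (hXmeas i) hAmeas]
  calc P {ω | ε' < μ {x | (⨆ i, h (X i ω)) < h x}}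
      ≤ P (⋂ i, (X i) ⁻¹' {x | h x < t'}) := measure_mono hsub
    _ = ∏ _i : Fin n, μ {x | h x < t'} := hprod
    _ ≤ ∏ _i : Fin n, (1 - ε') := Finset.prod_le_prod' fun i _ => hA
    _ = (1 - ε') ^ n := by simp [Finset.prod_const]
    _ = ENNReal.ofReal ((1 - ε) ^ n) := htarget.symm
end

section
/- Let E be a measurable space, μ a probability measure on E, and h : E → ℝ a measurable function. Let X_1, …, X_n be independent E-valued random variables, each with law μ (n ≥ 1). Then the expected μ-mass of the region where h strictly exceeds the sample maximum satisfies E[ μ({x ∈ E : h(x) > max_{1≤i≤n} h(X_i)}) ] ≤ 1/(n+1). -/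
open MeasureTheory ProbabilityTheory ENNReal

/-- for an i.i.d. sample `X_1, …, X_n` of law `μ` (`n ≥ 1`) and any
measurable `h : E → ℝ`, the expected `μ`-mass of the region where `h` strictly exceeds
the sample maximum is at most `1/(n+1)`. -/
theorem expected_exceedance_mass_le
    {E Ω : Type*} [MeasurableSpace E] [MeasurableSpace Ω]
    (P : Measure Ω) [IsProbabilityMeasure P]
    (μ : Measure E) [IsProbabilityMeasure μ]
    (h : E → ℝ) (hmeas : Measurable h)
    (n : ℕ) (hn : 1 ≤ n) (X : Fin n → Ω → E)
    (hXmeas : ∀ i, Measurable (X i))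
    (hlaw : ∀ i, Measure.map (X i) P = μ)
    (hindep : iIndepFun X P) :
    ∫⁻ ω, μ {x | (⨆ i, h (X i ω)) < h x} ∂P ≤ 1 / ((n : ℝ≥0∞) + 1) := by
  classical
  haveI : NeZero n := ⟨Nat.one_le_iff_ne_zero.mp hn⟩
  haveI : Nonempty (Fin n) := ⟨⟨0, hn⟩⟩
  set ν : Measure (Fin (n + 1) → E) := Measure.pi (fun _ => μ) with hνdef
  set A : Fin (n + 1) → Set (Fin (n + 1) → E) :=
    fun j => {z | ∀ i, i ≠ j → h (z i) < h (z j)} with hAdef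
  have hAmeas : ∀ j, MeasurableSet (A j) := by
    intro j
    have : A j = ⋂ i, ⋂ _ : i ≠ j, {z : Fin (n + 1) → E | h (z i) < h (z j)} := by
      ext z; simp [hAdef, Set.mem_setOf_eq]
    rw [this]
    exact MeasurableSet.iInter fun i => MeasurableSet.iInter fun _ =>
      measurableSet_lt (hmeas.comp (measurable_pi_apply i)) (hmeas.comp (measurable_pi_apply j))
  -- exchangeability: all `A j` have the same measure
  have hAeq : ∀ j k, ν (A j) = ν (A k) := by
    intro j k
    have hmp := measurePreserving_piCongrLeft (fun _ : Fin (n + 1) => μ) (Equiv.swap j k)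
    have hpre : (MeasurableEquiv.piCongrLeft (fun _ : Fin (n + 1) => E) (Equiv.swap j k)) ⁻¹' A j
        = A k := by
      ext x
      simp only [Set.mem_preimage, hAdef, Set.mem_setOf_eq]
      have happ : ∀ i, (MeasurableEquiv.piCongrLeft (fun _ : Fin (n + 1) => E)
          (Equiv.swap j k)) x i = x ((Equiv.swap j k).symm i) := by
        intro i
        rw [MeasurableEquiv.coe_piCongrLeft, Equiv.piCongrLeft_apply_eq_cast]
        rfl
      constructor
      · intro hx i hik
        have h1 := hx ((Equiv.swap j k) i) (by
          intro hc
          apply hik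
          have := congrArg (Equiv.swap j k).symm hc
          simpa [Equiv.swap_apply_left] using this)
        rw [happ, happ, Equiv.symm_apply_apply] at h1
        simpa [Equiv.symm_swap, Equiv.swap_apply_left] using h1
      · intro hx i hij
        rw [happ, happ]
        have : (Equiv.swap j k).symm j = k := by simp [Equiv.symm_swap, Equiv.swap_apply_left]
        rw [this]
        exact hx ((Equiv.swap j k).symm i) (by
          intro hc
          apply hij
          have := congrArg (Equiv.swap j k) hc
          simpa [Equiv.apply_symm_apply, Equiv.swap_apply_right] using this)
    calc ν (A j) = ν ((MeasurableEquiv.piCongrLeft (fun _ : Fin (n + 1) => E)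
            (Equiv.swap j k)) ⁻¹' A j) := (hmp.measure_preimage (hAmeas j).nullMeasurableSet).symm
      _ = ν (A k) := by rw [hpre]
  -- the A j are pairwise disjoint
  have hdisj : Pairwise (Function.onFun Disjoint A) := by
    intro j k hjk
    rw [Function.onFun, Set.disjoint_left]
    intro z hzj hzk
    exact lt_asymm (hzj k (Ne.symm hjk)) (hzk j hjk)
  have hsum : ∑ j, ν (A j) ≤ 1 := by
    rw [← tsum_fintype (L := SummationFilter.unconditional _), ← measure_iUnion hdisj hAmeas]
    exact prob_le_one
  have hlast : ν (A (Fin.last n)) ≤ 1 / ((n : ℝ≥0∞) + 1) := by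
    have hconst : ∑ j : Fin (n + 1), ν (A j)
        = ((n : ℝ≥0∞) + 1) * ν (A (Fin.last n)) := by
      have : ∀ j, ν (A j) = ν (A (Fin.last n)) := fun j => hAeq j (Fin.last n)
      rw [Finset.sum_congr rfl fun j _ => this j, Finset.sum_const, Finset.card_univ,
        Fintype.card_fin, nsmul_eq_mul]
      push_cast
      ring
    rw [ENNReal.le_div_iff_mul_le (Or.inl (by norm_num)) (Or.inl (by simp))]
    rw [mul_comm, ← hconst]
    exact hsum
  -- rewrite the supremum set
  have hset : ∀ y : Fin n → E, {x | (⨆ i, h (y i)) < h x} = {x | ∀ i, h (y i) < h x} := by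
    intro y
    ext x
    simp only [Set.mem_setOf_eq]
    constructor
    · intro hx i
      exact lt_of_le_of_lt (le_ciSup (f := fun i => h (y i)) (Set.Finite.bddAbove (Set.finite_range _)) i) hx
    · intro hx
      obtain ⟨i₀, hi₀⟩ := Finite.exists_max (fun i => h (y i))
      exact lt_of_le_of_lt (ciSup_le hi₀) (hx i₀)
  -- the joint law of the sample is the pi measure
  have hXvec : Measurable (fun ω i => X i ω) := measurable_pi_lambda _ hXmeas
  have hmap : Measure.map (fun ω i => X i ω) P = Measure.pi (fun _ : Fin n => μ) := by
    refine (Measure.pi_eq fun s hs => ?_).symm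
    rw [Measure.map_apply hXvec (MeasurableSet.univ_pi hs)]
    have hpre : (fun ω i => X i ω) ⁻¹' Set.pi Set.univ s = ⋂ i, X i ⁻¹' s i := by
      ext ω; simp [Set.mem_pi]
    rw [hpre, hindep.meas_iInter fun i => ⟨s i, hs i, rfl⟩]
    exact Finset.prod_congr rfl fun i _ => by
      rw [← hlaw i, Measure.map_apply (hXmeas i) (hs i)]
  -- the product-set formulation
  set S : Set ((Fin n → E) × E) := {p | ∀ i, h (p.1 i) < h p.2} with hSdef
  have hSmeas : MeasurableSet S := by
    have : S = ⋂ i, {p : (Fin n → E) × E | h (p.1 i) < h p.2} := by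
      ext p; simp [hSdef]
    rw [this]
    exact MeasurableSet.iInter fun i => measurableSet_lt
      (hmeas.comp ((measurable_pi_apply i).comp measurable_fst)) (hmeas.comp measurable_snd)
  have hg : Measurable fun y : Fin n → E => μ (Prod.mk y ⁻¹' S) :=
    measurable_measure_prodMk_left hSmeas
  have step1 : ∫⁻ ω, μ {x | (⨆ i, h (X i ω)) < h x} ∂P
      = ∫⁻ y, μ (Prod.mk y ⁻¹' S) ∂(Measure.pi (fun _ : Fin n => μ)) := by
    rw [← hmap, lintegral_map hg hXvec]
    refine lintegral_congr fun ω => ?_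
    congr 1
    rw [hset (fun i => X i ω)]
    ext x; simp [hSdef]
  have step2 : ∫⁻ y, μ (Prod.mk y ⁻¹' S) ∂(Measure.pi (fun _ : Fin n => μ))
      = ((Measure.pi (fun _ : Fin n => μ)).prod μ) S :=
    (Measure.prod_apply hSmeas).symm
  -- transport to the (n+1)-fold product
  have hmp2 := measurePreserving_piFinSuccAbove (fun _ : Fin (n + 1) => μ) (Fin.last n)
  have hswap : MeasurePreserving Prod.swap (μ.prod (Measure.pi (fun _ : Fin n => μ)))
      ((Measure.pi (fun _ : Fin n => μ)).prod μ) := Measure.measurePreserving_swap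
  have hmp3 : MeasurePreserving
      (Prod.swap ∘ (MeasurableEquiv.piFinSuccAbove (fun _ : Fin (n + 1) => E) (Fin.last n)))
      ν ((Measure.pi (fun _ : Fin n => μ)).prod μ) := hswap.comp hmp2
  have hpre3 : (Prod.swap ∘
      (MeasurableEquiv.piFinSuccAbove (fun _ : Fin (n + 1) => E) (Fin.last n))) ⁻¹' S
      = A (Fin.last n) := by
    ext z
    simp only [Set.mem_preimage, Function.comp_apply, hSdef, hAdef, Set.mem_setOf_eq,
      MeasurableEquiv.piFinSuccAbove_apply, Fin.removeNth]
    constructor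
    · intro hz i hi
      obtain ⟨i', rfl⟩ := Fin.exists_castSucc_eq.mpr hi
      have := hz i'
      simpa [Fin.succAbove_last, Fin.init] using this
    · intro hz i'
      have := hz (Fin.castSucc i') (Fin.castSucc_lt_last i').ne
      simpa [Fin.succAbove_last, Fin.init] using this
  have step3 : ((Measure.pi (fun _ : Fin n => μ)).prod μ) S = ν (A (Fin.last n)) := by
    rw [← hmp3.measure_preimage hSmeas.nullMeasurableSet, hpre3]
  rw [step1, step2, step3]
  exact hlast
end
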